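/- arXiv:2309.09998 — 2 statements merged into one kernel-verified Lean document; each statement's English description precedes it below -/
import Mathlib

section
/- Let M be a planar triangulation with an RGB-tiling (each face rainbow). Fix a color, say red. Define the red canal system whose 'canal lines' are the sequences of faces obtained by passing between two faces whenever they share a non-red (green or blue) edge. Then every face lies on exactly one red canal line, each red canal line in an MPG is a closed ring (cycle of faces), and along a red canal line the crossed edges alternate green and blue. -/
open SimpleGraph Finset

/-- A combinatorial maximal planar graph (planar triangulation): a simple graph together
with a collection of triangular faces such that each face is a triangle of the graph and
every edge lies in exactly two faces. -/
def IsMPG {n : ℕ} (G : SimpleGraph (Fin n)) (F : Finset (Finset (Fin n))) : Prop :=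
  (∀ f ∈ F, f.card = 3) ∧
  (∀ f ∈ F, ∀ u ∈ f, ∀ v ∈ f, u ≠ v → G.Adj u v) ∧
  (∀ u v : Fin n, G.Adj u v → (F.filter (fun f => u ∈ f ∧ v ∈ f)).card = 2)

/-- A non-4-colorable maximal planar graph of minimum order among all such graphs. -/
def MinNon4MPG {n : ℕ} (G : SimpleGraph (Fin n)) (F : Finset (Finset (Fin n))) : Prop :=
  IsMPG G F ∧ ¬ G.Colorable 4 ∧
    ∀ (m : ℕ) (H : SimpleGraph (Fin m)) (F' : Finset (Finset (Fin m))),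
      IsMPG H F' → ¬ H.Colorable 4 → n ≤ m

/-- An RGB-tiling: an edge 3-coloring such that the three edges of every triangular face
receive three distinct colors. -/
def IsRGB {n : ℕ} (F : Finset (Finset (Fin n))) (col : Sym2 (Fin n) → Fin 3) : Prop :=
  ∀ f ∈ F, ∀ u ∈ f, ∀ v ∈ f, ∀ w ∈ f, u ≠ v → u ≠ w → v ≠ w →
    col s(u, v) ≠ col s(u, w)

/-- The monochromatic subgraph of color `c`. -/
def monoSub {n : ℕ} (G : SimpleGraph (Fin n)) (col : Sym2 (Fin n) → Fin 3) (c : Fin 3) :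
    SimpleGraph (Fin n) where
  Adj u v := G.Adj u v ∧ col s(u, v) = c
  symm := by
    constructor
    intro u v h
    refine ⟨h.1.symm, ?_⟩
    rw [Sym2.eq_swap]
    exact h.2
  loopless := ⟨fun u h => G.irrefl h.1⟩

/-- There is an odd cycle all of whose edges have color `c`. -/
def HasOddMonoCycle {n : ℕ} (G : SimpleGraph (Fin n)) (col : Sym2 (Fin n) → Fin 3)
    (c : Fin 3) : Prop :=
  ∃ (v : Fin n) (p : (monoSub G col c).Walk v v), p.IsCycle ∧ Odd p.length

lemma pair_other {α : Type*} [DecidableEq α] {S : Finset α} {f : α}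
    (h : S.card = 2) (hf : f ∈ S) : ∃ g, g ≠ f ∧ S = {f, g} := by
  obtain ⟨x, y, hxy, rfl⟩ := Finset.card_eq_two.mp h
  simp only [Finset.mem_insert, Finset.mem_singleton] at hf
  rcases hf with rfl | rfl
  · exact ⟨y, hxy.symm, rfl⟩
  · exact ⟨x, hxy, by rw [Finset.pair_comm]⟩

lemma key {n : ℕ} (G : SimpleGraph (Fin n)) (F : Finset (Finset (Fin n)))
    (col : Sym2 (Fin n) → Fin 3) (hm : IsMPG G F) (hc : IsRGB F col)
    (f : Finset (Fin n)) (hf : f ∈ F) (a b c : Fin n)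
    (hab : a ≠ b) (hac : a ≠ c) (hbc : b ≠ c) (hfe : f = {a, b, c})
    (hred : col s(b, c) = 0) :
    (F.filter (fun g => g ≠ f ∧ ∃ u v : Fin n, u ≠ v ∧ u ∈ f ∧ v ∈ f ∧
        u ∈ g ∧ v ∈ g ∧ col s(u, v) ≠ (0 : Fin 3))).card = 2 := by
  classical
  obtain ⟨h3, hadj, h2⟩ := hm
  have ha : a ∈ f := by simp [hfe]
  have hb : b ∈ f := by simp [hfe]
  have hcmem : c ∈ f := by simp [hfe]
  have hcolab : col s(a, b) ≠ 0 := by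
    have h := hc f hf b hb a ha c hcmem hab.symm hbc hac
    rw [Sym2.eq_swap] at h
    rw [hred] at h
    exact h
  have hcolac : col s(a, c) ≠ 0 := by
    have h := hc f hf c hcmem a ha b hb hac.symm hbc.symm hab
    rw [Sym2.eq_swap] at h
    rw [Sym2.eq_swap (a := c) (b := b), hred] at h
    exact h
  have hSab := h2 a b (hadj f hf a ha b hb hab)
  have hSac := h2 a c (hadj f hf a ha c hcmem hac)
  have hfab : f ∈ F.filter (fun g => a ∈ g ∧ b ∈ g) := by
    simp [Finset.mem_filter, hf, ha, hb]
  have hfac : f ∈ F.filter (fun g => a ∈ g ∧ c ∈ g) := by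
    simp [Finset.mem_filter, hf, ha, hcmem]
  obtain ⟨g1, hg1f, hab_eq⟩ := pair_other hSab hfab
  obtain ⟨g2, hg2f, hac_eq⟩ := pair_other hSac hfac
  have hg1 : g1 ∈ F ∧ a ∈ g1 ∧ b ∈ g1 := by
    have : g1 ∈ F.filter (fun g => a ∈ g ∧ b ∈ g) := by rw [hab_eq]; simp
    simpa [Finset.mem_filter] using this
  have hg2 : g2 ∈ F ∧ a ∈ g2 ∧ c ∈ g2 := by
    have : g2 ∈ F.filter (fun g => a ∈ g ∧ c ∈ g) := by rw [hac_eq]; simp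
    simpa [Finset.mem_filter] using this
  have hg12 : g1 ≠ g2 := by
    intro hEq
    apply hg1f
    have hsub : f ⊆ g1 := by
      rw [hfe]
      intro x hx
      simp only [Finset.mem_insert, Finset.mem_singleton] at hx
      rcases hx with rfl | rfl | rfl
      · exact hg1.2.1
      · exact hg1.2.2
      · rw [hEq]; exact hg2.2.2
    have hcard : g1.card ≤ f.card := by rw [h3 f hf, h3 g1 hg1.1]
    exact (Finset.eq_of_subset_of_card_le hsub hcard).symm
  have hset : F.filter (fun g => g ≠ f ∧ ∃ u v : Fin n, u ≠ v ∧ u ∈ f ∧ v ∈ f ∧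
      u ∈ g ∧ v ∈ g ∧ col s(u, v) ≠ (0 : Fin 3)) = {g1, g2} := by
    ext g
    simp only [Finset.mem_filter, Finset.mem_insert, Finset.mem_singleton]
    constructor
    · rintro ⟨hgF, hgf, u, v, huv, huf, hvf, hug, hvg, hcoluv⟩
      rw [hfe] at huf hvf
      simp only [Finset.mem_insert, Finset.mem_singleton] at huf hvf
      have memab : (a ∈ g ∧ b ∈ g) → g = g1 := by
        intro hmem
        have : g ∈ ({f, g1} : Finset _) := by
          rw [← hab_eq]; simp [Finset.mem_filter, hgF, hmem]
        simp only [Finset.mem_insert, Finset.mem_singleton] at this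
        tauto
      have memac : (a ∈ g ∧ c ∈ g) → g = g2 := by
        intro hmem
        have : g ∈ ({f, g2} : Finset _) := by
          rw [← hac_eq]; simp [Finset.mem_filter, hgF, hmem]
        simp only [Finset.mem_insert, Finset.mem_singleton] at this
        tauto
      rcases huf with rfl | rfl | rfl <;> rcases hvf with rfl | rfl | rfl
      · exact absurd rfl huv
      · exact Or.inl (memab ⟨hug, hvg⟩)
      · exact Or.inr (memac ⟨hug, hvg⟩)
      · exact Or.inl (memab ⟨hvg, hug⟩)
      · exact absurd rfl huv
      · exact absurd hred hcoluv
      · exact Or.inr (memac ⟨hvg, hug⟩)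
      · exact absurd (by rw [Sym2.eq_swap]; exact hred) hcoluv
      · exact absurd rfl huv
    · rintro (rfl | rfl)
      · exact ⟨hg1.1, hg1f, a, b, hab, ha, hb, hg1.2.1, hg1.2.2, hcolab⟩
      · exact ⟨hg2.1, hg2f, a, c, hac, ha, hcmem, hg2.2.1, hg2.2.2, hcolac⟩
  rw [hset]
  exact Finset.card_pair hg12

/-- In an RGB-tiled MPG, every face is dual-adjacent through non-red edges to exactly two
other faces (so the red canal lines partition the faces into disjoint rings), and the two
non-red edges of each face have the two distinct colors green and blue (so a canal line
crosses green and blue edges alternately). -/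
theorem stmt14 {n : ℕ} (G : SimpleGraph (Fin n)) (F : Finset (Finset (Fin n)))
    (col : Sym2 (Fin n) → Fin 3) (hm : IsMPG G F) (hc : IsRGB F col) :
    (∀ f ∈ F, (F.filter (fun g => g ≠ f ∧ ∃ u v : Fin n, u ≠ v ∧ u ∈ f ∧ v ∈ f ∧
        u ∈ g ∧ v ∈ g ∧ col s(u, v) ≠ (0 : Fin 3))).card = 2) ∧
    (∀ f ∈ F, ∀ u ∈ f, ∀ v ∈ f, ∀ w ∈ f, u ≠ v → u ≠ w → v ≠ w →
      col s(u, v) ≠ (0 : Fin 3) → col s(u, w) ≠ (0 : Fin 3) →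
      col s(u, v) ≠ col s(u, w)) := by
  classical
  constructor
  · intro f hf
    obtain ⟨a, b, c, hab, hac, hbc, hfe⟩ := Finset.card_eq_three.mp (hm.1 f hf)
    have ha : a ∈ f := by simp [hfe]
    have hb : b ∈ f := by simp [hfe]
    have hcm : c ∈ f := by simp [hfe]
    have hxy : col s(a, b) ≠ col s(a, c) := hc f hf a ha b hb c hcm hab hac hbc
    have hxz : col s(a, b) ≠ col s(b, c) := by
      have h := hc f hf b hb a ha c hcm hab.symm hbc hac
      rwa [Sym2.eq_swap] at h
    have hyz : col s(a, c) ≠ col s(b, c) := by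
      have h := hc f hf c hcm a ha b hb hac.symm hbc.symm hab
      rw [Sym2.eq_swap] at h
      rwa [Sym2.eq_swap (a := c) (b := b)] at h
    have hzero : col s(a, b) = 0 ∨ col s(a, c) = 0 ∨ col s(b, c) = 0 := by
      by_contra h
      push_neg at h
      obtain ⟨h1, h2, h3⟩ := h
      have : ∀ x : Fin 3, x ≠ 0 → x = 1 ∨ x = 2 := by decide
      rcases this _ h1 with e1 | e1 <;> rcases this _ h2 with e2 | e2 <;>
        rcases this _ h3 with e3 | e3 <;> simp_all
    rcases hzero with h0 | h0 | h0
    · exact key G F col hm hc f hf c a b (Ne.symm hac) hbc.symm hab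
        (by rw [hfe]; ext x; simp; tauto) h0
    · exact key G F col hm hc f hf b a c hab.symm hbc hac
        (by rw [hfe]; ext x; simp; tauto) h0
    · exact key G F col hm hc f hf a b c hab hac hbc hfe h0
  · intro f hf u hu v hv w hw h1 h2 h3 _ _
    exact hc f hf u hu v hv w hw h1 h2 h3
end

section
/- Let M be a planar triangulation with an RGB-tiling, and let L be a red canal ring (a closed dual cycle never crossing red edges). Swapping green and blue on all edges crossed by L yields another valid RGB-tiling of M. -/
open SimpleGraph Finset

/-- Swapping green and blue on the edges crossed by a red canal ring (a set of non-red
edges meeting each face in either both or none of its non-red edges) yields again an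
RGB-tiling. -/
theorem stmt15 {n : ℕ} (G : SimpleGraph (Fin n)) (F : Finset (Finset (Fin n)))
    (col : Sym2 (Fin n) → Fin 3) (hm : IsMPG G F) (hc : IsRGB F col)
    (ring : Sym2 (Fin n) → Bool)
    (hring1 : ∀ e, ring e = true → col e ≠ (0 : Fin 3))
    (hring2 : ∀ f ∈ F, ∀ u ∈ f, ∀ v ∈ f, ∀ w ∈ f, u ≠ v → u ≠ w → v ≠ w →
      col s(u, v) ≠ (0 : Fin 3) → col s(u, w) ≠ (0 : Fin 3) →
      ring s(u, v) = ring s(u, w)) :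
    IsRGB F (fun e => if ring e then (![0, 2, 1] : Fin 3 → Fin 3) (col e) else col e) := by
  intro f hf u hu v hv w hw h1 h2 h3
  have hne := hc f hf u hu v hv w hw h1 h2 h3
  have hinj : ∀ x y : Fin 3, x ≠ y → (![0, 2, 1] : Fin 3 → Fin 3) x ≠ ![0, 2, 1] y := by
    decide
  have hnz : ∀ x : Fin 3, x ≠ 0 → (![0, 2, 1] : Fin 3 → Fin 3) x ≠ 0 := by decide
  by_cases r1 : ring s(u, v) <;> by_cases r2 : ring s(u, w) <;> simp only [r1, r2,
    if_true, if_false]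
  · exact hinj _ _ hne
  · have hz : col s(u, w) = 0 := by
      by_contra hz
      exact r2 (hring2 f hf u hu v hv w hw h1 h2 h3 (hring1 _ r1) hz ▸ r1)
    rw [hz]
    exact hnz _ (hring1 _ r1)
  · have hz : col s(u, v) = 0 := by
      by_contra hz
      exact r1 ((hring2 f hf u hu v hv w hw h1 h2 h3 hz (hring1 _ r2)) ▸ r2)
    rw [hz]
    exact fun h => hnz _ (hring1 _ r2) h.symm
  · exact hne
end
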